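/- arXiv:math/0609218 — 3 statements merged into one kernel-verified Lean document; each statement's English description precedes it below -/
import Mathlib

section
/- Let K : ℝ → Matrix (Fin n) (Fin n) ℝ be differentiable at t with derivative K', suppose K(t) is invertible and symmetric (K(t)ᵀ = K(t)), and let p ∈ ℝ^n be fixed. Define the compliance f(s) = ⟨u(s), K(s) *ᵥ u(s)⟩ where u(s) = (K(s))⁻¹ *ᵥ p. Then f is differentiable at t with derivative f'(t) = -⟨u(t), K' *ᵥ u(t)⟩. -/
open Matrix

attribute [local instance] Matrix.normedAddCommGroup Matrix.normedSpace

private lemma diffAt_det {n : ℕ} {M : ℝ → Matrix (Fin n) (Fin n) ℝ} {t : ℝ}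
    (h : ∀ i j, DifferentiableAt ℝ (fun s => M s i j) t) :
    DifferentiableAt ℝ (fun s => (M s).det) t := by
  simp only [Matrix.det_apply']
  exact DifferentiableAt.fun_sum fun σ _ =>
    ((DifferentiableAt.fun_finsetProd fun i _ => h (σ i) i)).const_mul _

private lemma diffAt_inv_entry {n : ℕ} {M : ℝ → Matrix (Fin n) (Fin n) ℝ} {t : ℝ}
    (h : ∀ i j, DifferentiableAt ℝ (fun s => M s i j) t)
    (hdet : (M t).det ≠ 0) (i j : Fin n) :
    DifferentiableAt ℝ (fun s => (M s)⁻¹ i j) t := by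
  have hadj : DifferentiableAt ℝ (fun s => (M s).adjugate i j) t := by
    simp only [Matrix.adjugate_apply]
    refine diffAt_det fun k l => ?_
    by_cases hk : k = j
    · subst hk
      simp only [Matrix.updateRow_self]
      exact differentiableAt_const _
    · simp only [Matrix.updateRow_ne hk]
      exact h k l
  have hd : DifferentiableAt ℝ (fun s => ((M s).det)⁻¹) t :=
    (diffAt_det h).inv hdet
  have : (fun s => (M s)⁻¹ i j) = fun s => ((M s).det)⁻¹ * (M s).adjugate i j := by
    funext s
    rw [Matrix.inv_def]
    simp [Ring.inverse_eq_inv']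
  rw [this]
  exact hd.mul hadj

/-- Self-adjointness of the compliance: if the symmetric stiffness matrix
`K(·)` is differentiable at `t` with derivative `K'` and `K(t)` is invertible,
then the compliance `f(s) = ⟨u(s), K(s) u(s)⟩` with `u(s) = K(s)⁻¹ p` is
differentiable at `t` with `f'(t) = -⟨u(t), K' u(t)⟩`. -/
theorem compliance_sensitivity
    (n : ℕ) (K : ℝ → Matrix (Fin n) (Fin n) ℝ) (K' : Matrix (Fin n) (Fin n) ℝ)
    (t : ℝ) (hK : HasDerivAt K K' t) (hinv : IsUnit (K t))
    (hsymm : (K t)ᵀ = K t)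
    (p : Fin n → ℝ)
    (u : ℝ → Fin n → ℝ) (hu : u = fun s => (K s)⁻¹ *ᵥ p)
    (f : ℝ → ℝ) (hf : f = fun s => u s ⬝ᵥ (K s *ᵥ u s)) :
    HasDerivAt f (-(u t ⬝ᵥ (K' *ᵥ u t))) t := by
  classical
  -- entrywise derivatives of K
  have hKij : ∀ i j, HasDerivAt (fun s => K s i j) (K' i j) t := by
    intro i j
    exact hasDerivAt_pi.mp ((hasDerivAt_pi.mp hK) i) j
  have hdet0 : (K t).det ≠ 0 := by
    have := (Matrix.isUnit_iff_isUnit_det (K t)).mp hinv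
    exact isUnit_iff_ne_zero.mp this
  have hdetdiff : DifferentiableAt ℝ (fun s => (K s).det) t :=
    diffAt_det fun i j => (hKij i j).differentiableAt
  have hev : ∀ᶠ s in nhds t, (K s).det ≠ 0 :=
    hdetdiff.continuousAt.eventually_ne hdet0
  -- entrywise derivatives of the inverse
  have hVdiff : ∀ i j, DifferentiableAt ℝ (fun s => (K s)⁻¹ i j) t :=
    diffAt_inv_entry (fun i j => (hKij i j).differentiableAt) hdet0
  set A : Matrix (Fin n) (Fin n) ℝ := (K t)⁻¹ with hA
  set Vd : Matrix (Fin n) (Fin n) ℝ :=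
    Matrix.of (fun i j => deriv (fun s => (K s)⁻¹ i j) t) with hVd
  have hV : ∀ i j, HasDerivAt (fun s => (K s)⁻¹ i j) (Vd i j) t := fun i j =>
    (hVdiff i j).hasDerivAt
  -- derivative of K s * (K s)⁻¹ = 1 gives K' * A + K t * Vd = 0
  have hzero : K' * A + K t * Vd = 0 := by
    ext i j
    have h1 : HasDerivAt (fun s => ∑ k, K s i k * (K s)⁻¹ k j)
        (∑ k, (K' i k * A k j + K t i k * Vd k j)) t :=
      HasDerivAt.fun_sum fun k _ => (hKij i k).mul (hV k j)
    have h2 : (fun s => ∑ k, K s i k * (K s)⁻¹ k j) =ᶠ[nhds t]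
        fun _ => (1 : Matrix (Fin n) (Fin n) ℝ) i j := by
      filter_upwards [hev] with s hs
      have : K s * (K s)⁻¹ = 1 := Matrix.mul_nonsing_inv _ (isUnit_iff_ne_zero.mpr hs)
      calc ∑ k, K s i k * (K s)⁻¹ k j = (K s * (K s)⁻¹) i j := by
            rw [Matrix.mul_apply]
        _ = (1 : Matrix (Fin n) (Fin n) ℝ) i j := by rw [this]
    have h3 : HasDerivAt (fun s => ∑ k, K s i k * (K s)⁻¹ k j) 0 t :=
      (hasDerivAt_const t _).congr_of_eventuallyEq h2
    have h4 := h1.unique h3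
    simpa [Matrix.add_apply, Matrix.mul_apply, Matrix.zero_apply, Finset.sum_add_distrib]
      using h4
  have hAK : A * K t = 1 := Matrix.nonsing_inv_mul _ (isUnit_iff_ne_zero.mpr hdet0)
  have hVdval : Vd = -(A * K' * A) := by
    have h5 : K t * Vd = -(K' * A) := eq_neg_of_add_eq_zero_right hzero
    calc Vd = (A * K t) * Vd := by rw [hAK, Matrix.one_mul]
      _ = A * (K t * Vd) := by rw [Matrix.mul_assoc]
      _ = A * -(K' * A) := by rw [h5]
      _ = -(A * (K' * A)) := by rw [Matrix.mul_neg]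
      _ = -(A * K' * A) := by rw [Matrix.mul_assoc]
  have hAsym : Aᵀ = A := by rw [hA, Matrix.transpose_nonsing_inv, hsymm]
  have hut : u t = A *ᵥ p := by rw [hu]
  -- derivative of g s = ((K s)⁻¹ *ᵥ p) ⬝ᵥ p
  have hg : HasDerivAt (fun s => ∑ i, (∑ j, (K s)⁻¹ i j * p j) * p i)
      (∑ i, (∑ j, Vd i j * p j) * p i) t :=
    HasDerivAt.fun_sum fun i _ =>
      (HasDerivAt.fun_sum fun j _ => (hV i j).mul_const (p j)).mul_const (p i)
  have hfg : f =ᶠ[nhds t] fun s => ∑ i, (∑ j, (K s)⁻¹ i j * p j) * p i := by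
    filter_upwards [hev] with s hs
    have h1 : K s * (K s)⁻¹ = 1 := Matrix.mul_nonsing_inv _ (isUnit_iff_ne_zero.mpr hs)
    have h2 : K s *ᵥ ((K s)⁻¹ *ᵥ p) = p := by
      rw [Matrix.mulVec_mulVec, h1, Matrix.one_mulVec]
    calc f s = ((K s)⁻¹ *ᵥ p) ⬝ᵥ (K s *ᵥ ((K s)⁻¹ *ᵥ p)) := by rw [hf, hu]
      _ = ((K s)⁻¹ *ᵥ p) ⬝ᵥ p := by rw [h2]
      _ = ∑ i, (∑ j, (K s)⁻¹ i j * p j) * p i := by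
          simp [dotProduct, Matrix.mulVec]
  have hmain : HasDerivAt f (∑ i, (∑ j, Vd i j * p j) * p i) t :=
    hg.congr_of_eventuallyEq hfg
  have hsum : (∑ i, (∑ j, Vd i j * p j) * p i) = (Vd *ᵥ p) ⬝ᵥ p := by
    simp [Matrix.mulVec, dotProduct]
  have key : (Vd *ᵥ p) ⬝ᵥ p = -(u t ⬝ᵥ (K' *ᵥ u t)) := by
    rw [hVdval, hut, Matrix.neg_mulVec, neg_dotProduct, neg_inj]
    calc ((A * K' * A) *ᵥ p) ⬝ᵥ p
        = (A *ᵥ (K' *ᵥ (A *ᵥ p))) ⬝ᵥ p := by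
          rw [Matrix.mulVec_mulVec, Matrix.mulVec_mulVec]
      _ = p ⬝ᵥ (A *ᵥ (K' *ᵥ (A *ᵥ p))) := dotProduct_comm _ _
      _ = (p ᵥ* A) ⬝ᵥ (K' *ᵥ (A *ᵥ p)) := Matrix.dotProduct_mulVec _ _ _
      _ = (A *ᵥ p) ⬝ᵥ (K' *ᵥ (A *ᵥ p)) := by
          have hvm : p ᵥ* A = A *ᵥ p := by rw [← Matrix.mulVec_transpose, hAsym]
          rw [hvm]
  rw [← key, ← hsum]
  exact hmain
end

section
/- Let K : ℝ → Matrix (Fin n) (Fin n) ℝ be differentiable at t with derivative K', with K(t) invertible and symmetric, let p ∈ ℝ^n be fixed, u(s) = (K(s))⁻¹ *ᵥ p, and f(s) = ⟨u(s), K(s) *ᵥ u(s)⟩. If K' is positive semidefinite (i.e. ⟨v, K' *ᵥ v⟩ ≥ 0 for all v ∈ ℝ^n), then f'(t) ≤ 0; i.e. the gradient of the compliance with respect to the density is nonpositive, so the negative gradient -f'(t) = ⟨u(t), K' *ᵥ u(t)⟩ ≥ 0 is a descent quantity. -/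
open Matrix Filter Topology

attribute [local instance] Matrix.normedAddCommGroup Matrix.normedSpace

lemma myContinuousAt_inv {n : ℕ} (K : ℝ → Matrix (Fin n) (Fin n) ℝ) (t : ℝ)
    (hK : ContinuousAt K t) (hinv : IsUnit (K t)) :
    ContinuousAt (fun s => (K s)⁻¹) t := by
  have hne : (K t).det ≠ 0 := ((Matrix.isUnit_iff_isUnit_det _).mp hinv).ne_zero
  have h1 : ContinuousAt Ring.inverse (K t).det := by
    rw [Ring.inverse_eq_inv']
    exact continuousAt_inv₀ hne
  exact (continuousAt_matrix_inv _ h1).comp hK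

lemma myHasDerivAt_inv {n : ℕ} (K : ℝ → Matrix (Fin n) (Fin n) ℝ)
    (K' : Matrix (Fin n) (Fin n) ℝ) (t : ℝ)
    (hK : HasDerivAt K K' t) (hinv : IsUnit (K t)) :
    HasDerivAt (fun s => (K s)⁻¹) (-((K t)⁻¹ * K' * (K t)⁻¹)) t := by
  refine hasDerivAt_iff_tendsto_slope.mpr ?_
  have hV : ContinuousAt (fun s => (K s)⁻¹) t :=
    myContinuousAt_inv K t hK.continuousAt hinv
  have hslope : Tendsto (slope K t) (𝓝[≠] t) (𝓝 K') :=
    hasDerivAt_iff_tendsto_slope.mp hK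
  have hopen : IsOpen {M : Matrix (Fin n) (Fin n) ℝ | IsUnit M} := by
    have : {M : Matrix (Fin n) (Fin n) ℝ | IsUnit M}
        = Matrix.det ⁻¹' {x : ℝ | x ≠ 0} := by
      ext M
      simp [Matrix.isUnit_iff_isUnit_det, isUnit_iff_ne_zero]
    rw [this]
    exact isOpen_ne.preimage continuous_id.matrix_det
  have hU : ∀ᶠ s in 𝓝 t, IsUnit (K s) :=
    hK.continuousAt.preimage_mem_nhds (hopen.mem_nhds hinv)
  have hdett : IsUnit (K t).det := (Matrix.isUnit_iff_isUnit_det _).mp hinv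
  have heq : ∀ᶠ s in 𝓝[≠] t, -((K s)⁻¹ * slope K t s * (K t)⁻¹)
      = slope (fun s => (K s)⁻¹) t s := by
    filter_upwards [nhdsWithin_le_nhds hU] with s hsu
    have hdets : IsUnit (K s).det := (Matrix.isUnit_iff_isUnit_det _).mp hsu
    have ha : (K s)⁻¹ * K s = 1 := Matrix.nonsing_inv_mul _ hdets
    have hb : K t * (K t)⁻¹ = 1 := Matrix.mul_nonsing_inv _ hdett
    have h1 : (K s)⁻¹ * (K s - K t) * (K t)⁻¹ = (K t)⁻¹ - (K s)⁻¹ := by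
      rw [Matrix.mul_sub, ha, Matrix.sub_mul, one_mul, Matrix.mul_assoc, hb, mul_one]
    rw [slope_def_module, slope_def_module, ← neg_sub ((K t)⁻¹), ← h1,
      mul_smul_comm, smul_mul_assoc, smul_neg, ← neg_smul]
  have hVt : Tendsto (fun s => (K s)⁻¹) (𝓝[≠] t) (𝓝 ((K t)⁻¹)) :=
    hV.tendsto.mono_left nhdsWithin_le_nhds
  have : Tendsto (fun s => -((K s)⁻¹ * slope K t s * (K t)⁻¹)) (𝓝[≠] t)
      (𝓝 (-((K t)⁻¹ * K' * (K t)⁻¹))) :=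
    (((hVt.mul hslope).mul tendsto_const_nhds)).neg
  exact this.congr' heq

/-- If moreover the derivative `K'` of the symmetric stiffness matrix is
positive semidefinite (as under the SIMP interpolation), then the derivative of
the compliance `f(s) = ⟨u(s), K(s) u(s)⟩`, `u(s) = K(s)⁻¹ p`, is nonpositive:
`f'(t) = -⟨u(t), K' u(t)⟩ ≤ 0`, so `-f'(t) = ⟨u(t), K' u(t)⟩ ≥ 0`. -/
theorem compliance_gradient_nonpositive
    (n : ℕ) (K : ℝ → Matrix (Fin n) (Fin n) ℝ) (K' : Matrix (Fin n) (Fin n) ℝ)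
    (t : ℝ) (hK : HasDerivAt K K' t) (hinv : IsUnit (K t))
    (hsymm : (K t)ᵀ = K t)
    (hpsd : ∀ v : Fin n → ℝ, 0 ≤ v ⬝ᵥ (K' *ᵥ v))
    (p : Fin n → ℝ)
    (u : ℝ → Fin n → ℝ) (hu : u = fun s => (K s)⁻¹ *ᵥ p)
    (f : ℝ → ℝ) (hf : f = fun s => u s ⬝ᵥ (K s *ᵥ u s)) :
    deriv f t = -(u t ⬝ᵥ (K' *ᵥ u t)) ∧ deriv f t ≤ 0 := by
  have hV : HasDerivAt (fun s => (K s)⁻¹) (-((K t)⁻¹ * K' * (K t)⁻¹)) t :=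
    myHasDerivAt_inv K K' t hK hinv
  -- linear functional M ↦ (M *ᵥ p) ⬝ᵥ p
  let L : Matrix (Fin n) (Fin n) ℝ →ₗ[ℝ] ℝ :=
    { toFun := fun M => (M *ᵥ p) ⬝ᵥ p
      map_add' := by intro M N; simp [Matrix.add_mulVec, add_dotProduct]
      map_smul' := by intro c M; simp [Matrix.smul_mulVec, smul_dotProduct] }
  have hL : HasDerivAt (fun s => L.toContinuousLinearMap ((K s)⁻¹))
      (L.toContinuousLinearMap (-((K t)⁻¹ * K' * (K t)⁻¹))) t :=
    L.toContinuousLinearMap.hasFDerivAt.comp_hasDerivAt t hV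
  have hopen : IsOpen {M : Matrix (Fin n) (Fin n) ℝ | IsUnit M} := by
    have : {M : Matrix (Fin n) (Fin n) ℝ | IsUnit M}
        = Matrix.det ⁻¹' {x : ℝ | x ≠ 0} := by
      ext M
      simp [Matrix.isUnit_iff_isUnit_det, isUnit_iff_ne_zero]
    rw [this]
    exact isOpen_ne.preimage continuous_id.matrix_det
  have hU : ∀ᶠ s in 𝓝 t, IsUnit (K s) :=
    hK.continuousAt.preimage_mem_nhds (hopen.mem_nhds hinv)
  have hfeq : f =ᶠ[𝓝 t] fun s => L.toContinuousLinearMap ((K s)⁻¹) := by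
    filter_upwards [hU] with s hs
    have hdets : IsUnit (K s).det := (Matrix.isUnit_iff_isUnit_det _).mp hs
    have : K s *ᵥ ((K s)⁻¹ *ᵥ p) = p := by
      rw [Matrix.mulVec_mulVec, Matrix.mul_nonsing_inv _ hdets, Matrix.one_mulVec]
    simp only [hf, hu, L, LinearMap.coe_toContinuousLinearMap', LinearMap.coe_mk, AddHom.coe_mk]
    rw [this]
  have hderiv : deriv f t = L.toContinuousLinearMap (-((K t)⁻¹ * K' * (K t)⁻¹)) := by
    rw [hfeq.deriv_eq]
    exact hL.deriv
  have hBt : ((K t)⁻¹)ᵀ = (K t)⁻¹ := by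
    rw [Matrix.transpose_nonsing_inv, hsymm]
  have key : L.toContinuousLinearMap (-((K t)⁻¹ * K' * (K t)⁻¹))
      = -(u t ⬝ᵥ (K' *ᵥ u t)) := by
    have h1 : (-((K t)⁻¹ * K' * (K t)⁻¹)) *ᵥ p
        = -((K t)⁻¹ *ᵥ (K' *ᵥ ((K t)⁻¹ *ᵥ p))) := by
      rw [Matrix.neg_mulVec, Matrix.mulVec_mulVec, Matrix.mulVec_mulVec]
    show (_ *ᵥ p) ⬝ᵥ p = _
    rw [h1, hu]
    simp only [neg_dotProduct, neg_inj]
    rw [dotProduct_comm, Matrix.dotProduct_mulVec, ← Matrix.mulVec_transpose, hBt,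
      dotProduct_comm]
  refine ⟨hderiv.trans key, ?_⟩
  rw [hderiv.trans key]
  exact neg_nonpos.mpr (hpsd (u t))
end

section
/- Let g, x ∈ ℝ^n with g_i ≠ 0 for all i, let H be an S × n real matrix with rows h_1, …, h_S, let Ē = Hᵀ (the n × S matrix of constraint gradients), let E be the n × S matrix with entries E_{ik} = H_{ki}/g_i (the KKT system scaled row-wise by the components of g), and let A be the diagonal n × n matrix with A_{ii} = g_i x_i. Then for every λ ∈ ℝ^S, Venkayya's resolving system Eᵀ A E λ = Eᵀ A 𝟙 holds if and only if Σ_{i=1}^n (x_i/g_i) (-g_i + Σ_{l=1}^S λ_l H_{li}) H_{ki} = 0 for every k = 1, …, S; i.e. Venkayya's generalized optimality criteria multipliers are exactly the Hestenes multipliers for the weighted inner product with diagonal weights x_i/g_i. -/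
open Matrix

/-- Venkayya's generalized optimality criteria multipliers are exactly the
Hestenes multipliers for the weighted inner product with diagonal weights
`x_i / g_i`: with `E` the row-wise scaled KKT matrix `E i k = H k i / g i` and
`A = diag (g i * x i)`, the resolving system `Eᵀ A E λ = Eᵀ A 𝟙` holds iff the
projected gradient `-g + Hᵀλ` is `A`-weighted-orthogonal (with weights
`x_i / g_i`) to every active constraint gradient (row of `H`). -/
theorem venkayya_multipliers_are_weighted_hestenes
    (n S : ℕ) (g x : Fin n → ℝ) (hg : ∀ i, g i ≠ 0)
    (H : Matrix (Fin S) (Fin n) ℝ)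
    (E : Matrix (Fin n) (Fin S) ℝ) (hE : E = fun i k => H k i / g i)
    (A : Matrix (Fin n) (Fin n) ℝ) (hA : A = Matrix.diagonal fun i => g i * x i) :
    ∀ lam : Fin S → ℝ,
      (Eᵀ * A * E) *ᵥ lam = (Eᵀ * A) *ᵥ (fun _ => (1 : ℝ)) ↔
        ∀ k : Fin S,
          ∑ i : Fin n, (x i / g i) * (-g i + ∑ l : Fin S, lam l * H l i) * H k i = 0 := by
  intro lam
  subst hE hA
  rw [funext_iff]
  apply forall_congr'
  intro k
  simp only [mulVec, dotProduct, Matrix.mul_apply, Matrix.transpose_apply,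
    Matrix.diagonal_apply, mul_ite, mul_zero, Finset.sum_ite_eq', Finset.mem_univ,
    if_true, mul_one]
  rw [← sub_eq_zero]
  have h1 : ∀ i : Fin n, (x i / g i) * (-g i + ∑ l : Fin S, lam l * H l i) * H k i
      = (∑ l : Fin S, H k i / g i * (g i * x i) * (H l i / g i) * lam l)
        - H k i / g i * (g i * x i) := by
    intro i
    have hgi := hg i
    have : ∀ l ∈ Finset.univ, H k i / g i * (g i * x i) * (H l i / g i) * lam l
        = x i / g i * H k i * (lam l * H l i) := by
      intro l _; field_simp
    rw [Finset.sum_congr rfl this, ← Finset.mul_sum]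
    field_simp
    ring
  rw [Finset.sum_congr rfl (fun i _ => h1 i), Finset.sum_sub_distrib, Finset.sum_comm]
  erw [Finset.sum_congr rfl (fun j _ => congrArg (· * lam j) (Matrix.mul_apply (M := (fun i k => H k i / g i : Matrix (Fin n) (Fin S) ℝ)ᵀ * Matrix.diagonal fun i => g i * x i) (N := (fun i k => H k i / g i : Matrix (Fin n) (Fin S) ℝ))))]
  simp [Matrix.mul_apply, Matrix.diagonal_apply, Finset.sum_mul, mul_assoc]
  exact Iff.rfl
end
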